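/- A group T is called telescopic if for every finite group Γ there exists a finite-index subgroup H ≤ T with N_T(H)/H ≅ Γ. If f : A → B is a surjective group homomorphism and B is telescopic, then A is telescopic. -/

import Mathlib

/-- A group `T` is telescopic if every finite group is realised as `N_T(H)/H`
for some finite-index subgroup `H ≤ T`. -/
def IsTelescopic (T : Type*) [Group T] : Prop :=
  ∀ (Γ : Type) [Group Γ] [Finite Γ],
    ∃ H : Subgroup T, H.FiniteIndex ∧
      Nonempty (((Subgroup.normalizer (H : Set T)) ⧸ H.subgroupOf (Subgroup.normalizer (H : Set T))) ≃* Γ)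

/-!
Preimages under a surjection `f : A →* B` preserve index, and the normalizer of `f⁻¹(H)` is
`f⁻¹(N_B(H))`. Hence `f` induces an isomorphism `N_A(f⁻¹H)/f⁻¹H ≃* N_B(H)/H`, so every subgroup
of `B` witnessing telescopicity for `Γ` pulls back to one of `A`.
-/

namespace Subgroup

variable {A B : Type*} [Group A] [Group B] {f : A →* B}

theorem FiniteIndex.comap_of_surjective (hf : Function.Surjective f) {H : Subgroup B}
    (hH : H.FiniteIndex) : (H.comap f).FiniteIndex :=
  ⟨by rw [index_comap_of_surjective H hf]; exact hH.index_ne_zero⟩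

abbrev weylGroup {G : Type*} [Group G] (H : Subgroup G) : Type _ :=
  normalizer (H : Set G) ⧸ H.subgroupOf (normalizer (H : Set G))

def normalizerComapToWeylGroup (hf : Function.Surjective f) (H : Subgroup B) :
    normalizer (H.comap f : Set A) →* H.weylGroup :=
  (QuotientGroup.mk' _).comp <| (f.subgroupComap _).comp
    (MulEquiv.subgroupCongr (comap_normalizer_eq_of_surjective H hf).symm).toMonoidHom

theorem normalizerComapToWeylGroup_surjective (hf : Function.Surjective f) (H : Subgroup B) :
    Function.Surjective (normalizerComapToWeylGroup hf H) :=
  (QuotientGroup.mk'_surjective _).comp <|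
    (f.subgroupComap_surjective_of_surjective _ hf).comp (MulEquiv.surjective _)

theorem ker_normalizerComapToWeylGroup (hf : Function.Surjective f) (H : Subgroup B) :
    (normalizerComapToWeylGroup hf H).ker =
      (H.comap f).subgroupOf (normalizer (H.comap f : Set A)) :=
  Subgroup.ext fun _ => QuotientGroup.eq_one_iff _

noncomputable def weylGroupComapEquiv (hf : Function.Surjective f) (H : Subgroup B) :
    (H.comap f).weylGroup ≃* H.weylGroup :=
  (QuotientGroup.quotientMulEquivOfEq (ker_normalizerComapToWeylGroup hf H).symm).trans
    (QuotientGroup.quotientKerEquivOfSurjective _ (normalizerComapToWeylGroup_surjective hf H))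

end Subgroup

/-- Telescopicity pulls back along surjective group homomorphisms. -/
theorem isTelescopic_of_surjective {A B : Type*} [Group A] [Group B]
    (f : A →* B) (hf : Function.Surjective f) (hB : IsTelescopic B) :
    IsTelescopic A := by
  intro Γ _ _
  obtain ⟨H, hH, ⟨e⟩⟩ := hB Γ
  exact ⟨H.comap f, hH.comap_of_surjective hf, ⟨(Subgroup.weylGroupComapEquiv hf H).trans e⟩⟩
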